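/- Along any differentiable solution τ ↦ (x1(τ), x2(τ), z5(τ), z6(τ)) of the averaged ESC closed-loop system, the function M(τ) = C1 c1 x1(τ) z5(τ) + C2 c2 x2(τ) z6(τ) is differentiable and satisfies dM/dτ = −(a k1/ω0)(C1 c1 z5(τ)² + C2 c2 z6(τ)²) M(τ) + (a k2/ω0)(C1 c1 x1(τ) z6(τ) − C2 c2 x2(τ) z5(τ))². -/

import Mathlib

open Real Filter

/-- The averaged ESC closed-loop system with positive constants `a, k1, k2, ω0, C1, C2, c1, c2`:
`x1' = −(a k1/ω0) z5 (C1 c1 x1 z5 + C2 c2 x2 z6)`,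
`x2' = −(a k1/ω0) z6 (C1 c1 x1 z5 + C2 c2 x2 z6)`,
`z5' = (a k2/ω0) z6 (C1 c1 x1 z6 − C2 c2 x2 z5)`,
`z6' = −(a k2/ω0) z5 (C1 c1 x1 z6 − C2 c2 x2 z5)`, holding for all `τ ∈ s`. -/
def AvgESC (a k1 k2 ω0 C1 C2 c1 c2 : ℝ) (x1 x2 z5 z6 : ℝ → ℝ) (s : Set ℝ) : Prop :=
  ∀ τ ∈ s,
    HasDerivAt x1
      (-(a * k1 / ω0) * z5 τ * (C1 * c1 * x1 τ * z5 τ + C2 * c2 * x2 τ * z6 τ)) τ ∧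
    HasDerivAt x2
      (-(a * k1 / ω0) * z6 τ * (C1 * c1 * x1 τ * z5 τ + C2 * c2 * x2 τ * z6 τ)) τ ∧
    HasDerivAt z5
      ((a * k2 / ω0) * z6 τ * (C1 * c1 * x1 τ * z6 τ - C2 * c2 * x2 τ * z5 τ)) τ ∧
    HasDerivAt z6
      (-(a * k2 / ω0) * z5 τ * (C1 * c1 * x1 τ * z6 τ - C2 * c2 * x2 τ * z5 τ)) τ

/- Product rule: the `x'`-terms of `M'` carry the common factor `M` and combine into
`-(a k1/ω0)(C1 c1 z5² + C2 c2 z6²) M`, while the `z'`-terms are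
`(a k2/ω0)(C1 c1 x1 z6 - C2 c2 x2 z5)` times `C1 c1 x1 z6 - C2 c2 x2 z5`. -/
theorem AvgESC.hasDerivAt_output {a k1 k2 ω0 C1 C2 c1 c2 : ℝ} {x1 x2 z5 z6 : ℝ → ℝ}
    {s : Set ℝ} (hsol : AvgESC a k1 k2 ω0 C1 C2 c1 c2 x1 x2 z5 z6 s) {τ : ℝ} (hτ : τ ∈ s) :
    HasDerivAt
      (fun σ => C1 * c1 * x1 σ * z5 σ + C2 * c2 * x2 σ * z6 σ)
      (-(a * k1 / ω0) * (C1 * c1 * z5 τ ^ 2 + C2 * c2 * z6 τ ^ 2) *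
          (C1 * c1 * x1 τ * z5 τ + C2 * c2 * x2 τ * z6 τ) +
        (a * k2 / ω0) * (C1 * c1 * x1 τ * z6 τ - C2 * c2 * x2 τ * z5 τ) ^ 2) τ := by
  obtain ⟨hx1, hx2, hz5, hz6⟩ := hsol τ hτ
  refine (((hx1.const_mul (C1 * c1)).mul hz5).add
    ((hx2.const_mul (C2 * c2)).mul hz6)).congr_deriv ?_
  ring

theorem stmt14_general (a k1 k2 ω0 C1 C2 c1 c2 : ℝ)
    (x1 x2 z5 z6 : ℝ → ℝ)
    (hsol : AvgESC a k1 k2 ω0 C1 C2 c1 c2 x1 x2 z5 z6 Set.univ) :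
    ∀ τ : ℝ,
      HasDerivAt
        (fun σ => C1 * c1 * x1 σ * z5 σ + C2 * c2 * x2 σ * z6 σ)
        (-(a * k1 / ω0) * (C1 * c1 * z5 τ ^ 2 + C2 * c2 * z6 τ ^ 2) *
            (C1 * c1 * x1 τ * z5 τ + C2 * c2 * x2 τ * z6 τ) +
          (a * k2 / ω0) * (C1 * c1 * x1 τ * z6 τ - C2 * c2 * x2 τ * z5 τ) ^ 2) τ :=
  fun τ => hsol.hasDerivAt_output (Set.mem_univ τ)

/-- Along any differentiable solution of the averaged ESC closed-loop system,
`M = C1 c1 x1 z5 + C2 c2 x2 z6` is differentiable with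
`dM/dτ = −(a k1/ω0)(C1 c1 z5² + C2 c2 z6²) M + (a k2/ω0)(C1 c1 x1 z6 − C2 c2 x2 z5)²`. -/
theorem stmt14 (a k1 k2 ω0 C1 C2 c1 c2 : ℝ)
    (ha : 0 < a) (hk1 : 0 < k1) (hk2 : 0 < k2) (hω0 : 0 < ω0)
    (hC1 : 0 < C1) (hC2 : 0 < C2) (hc1 : 0 < c1) (hc2 : 0 < c2)
    (x1 x2 z5 z6 : ℝ → ℝ)
    (hsol : AvgESC a k1 k2 ω0 C1 C2 c1 c2 x1 x2 z5 z6 Set.univ) :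
    ∀ τ : ℝ,
      HasDerivAt
        (fun σ => C1 * c1 * x1 σ * z5 σ + C2 * c2 * x2 σ * z6 σ)
        (-(a * k1 / ω0) * (C1 * c1 * z5 τ ^ 2 + C2 * c2 * z6 τ ^ 2) *
            (C1 * c1 * x1 τ * z5 τ + C2 * c2 * x2 τ * z6 τ) +
          (a * k2 / ω0) * (C1 * c1 * x1 τ * z6 τ - C2 * c2 * x2 τ * z5 τ) ^ 2) τ :=
  stmt14_general a k1 k2 ω0 C1 C2 c1 c2 x1 x2 z5 z6 hsol
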